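/- arXiv:2009.10157 — 2 statements merged into one kernel-verified Lean document; each statement's English description precedes it below -/
import Mathlib

section
/- Let S, I : [0,∞) → ℝ be differentiable functions satisfying S'(t) = −β S(t) I(t) and I'(t) = β S(t) I(t) − γ I(t) for all t ≥ 0, with S(0) = x ≥ 0 and I(0) = y ≥ 0. Then for every t ≥ 0 one has S(t) ≥ 0, I(t) ≥ 0 and S(t) + I(t) ≤ x + y; moreover if x > 0 then S(t) > 0 for all t ≥ 0, and if y > 0 then I(t) > 0 for all t ≥ 0. -/
/-!
Both equations are linear in the unknown once the other unknown is regarded as a given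
coefficient: `S' = (-β I) S` and `I' = (β S - γ) I`. Hence `S t = x · exp (∫₀ᵗ -β I)` and
`I t = y · exp (∫₀ᵗ (β S - γ))`, which gives nonnegativity, and positivity when the initial
value is positive. Adding the equations, `(S + I)' = -γ I ≤ 0`, so `S + I` decreases.
-/

open Set Filter

/-- An SIR solution with parameters β, γ and initial data (x, y):
differentiable functions S, I on [0,∞) with S' = -βSI, I' = βSI - γI,
S(0) = x, I(0) = y. -/
def IsSIRSolution (β γ x y : ℝ) (S I : ℝ → ℝ) : Prop :=
  S 0 = x ∧ I 0 = y ∧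
  ∀ t, 0 ≤ t →
    HasDerivWithinAt S (-(β * S t * I t)) (Set.Ici 0) t ∧
    HasDerivWithinAt I (β * S t * I t - γ * I t) (Set.Ici 0) t

theorem eq_mul_exp_integral_of_hasDerivWithinAt {a f : ℝ → ℝ} {t₀ T : ℝ}
    (ha : ContinuousOn a (Ici t₀))
    (hf : ∀ t, t₀ ≤ t → HasDerivWithinAt f (a t * f t) (Ici t₀) t) (hT : t₀ ≤ T) :
    f T = f t₀ * Real.exp (∫ s in t₀..T, a s) := by
  -- Extending `a` by `a t₀` to the left makes it continuous on `ℝ`, so that FTC applies.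
  set a' : ℝ → ℝ := fun u => a (max u t₀)
  have ha' : Continuous a' := ha.comp_continuous (continuous_id.max continuous_const)
    fun u => le_max_right u t₀
  set F : ℝ → ℝ := fun u => ∫ s in t₀..u, a' s
  have hF : ∀ t, HasDerivAt F (a' t) t := fun t =>
    (ha'.integral_hasStrictDerivAt t₀ t).hasDerivAt
  set G : ℝ → ℝ := fun u => f u * Real.exp (-F u)
  have hG_cont : ContinuousOn G (Icc t₀ T) := fun t ht =>
    ((hf t ht.1).continuousWithinAt.mono Icc_subset_Ici_self).mul
      (hF t).continuousAt.neg.rexp.continuousWithinAt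
  have hG_deriv : ∀ t ∈ Ico t₀ T, HasDerivWithinAt G 0 (Ici t) t := by
    intro t ht
    have hft := (hf t ht.1).mono (Ici_subset_Ici.2 ht.1)
    have ha't : a' t = a t := by simp only [a', max_eq_left ht.1]
    exact (hft.mul (hF t).hasDerivWithinAt.neg.exp).congr_deriv (by rw [ha't]; ring)
  have hG : G T = G t₀ := constant_of_has_deriv_right_zero hG_cont hG_deriv T ⟨hT, le_rfl⟩
  have hFT : F T = ∫ s in t₀..T, a s :=
    intervalIntegral.integral_congr fun s hs => by
      simp only [a', max_eq_left (uIcc_of_le hT ▸ hs).1]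
  simp only [G, F, intervalIntegral.integral_same, neg_zero, Real.exp_zero, mul_one] at hG
  rw [← hFT, ← hG, mul_assoc, ← Real.exp_add, neg_add_cancel, Real.exp_zero, mul_one]

theorem antitoneOn_Ici_of_hasDerivWithinAt_nonpos {f f' : ℝ → ℝ} {t₀ : ℝ}
    (hf : ∀ t, t₀ ≤ t → HasDerivWithinAt f (f' t) (Ici t₀) t) (hf' : ∀ t, t₀ < t → f' t ≤ 0) :
    AntitoneOn f (Ici t₀) := by
  refine antitoneOn_of_hasDerivWithinAt_nonpos (f' := f') (convex_Ici t₀)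
    (fun t ht => (hf t ht).continuousWithinAt) ?_ ?_ <;> rw [interior_Ici]
  · exact fun t ht => (hf t ht.le).mono Ioi_subset_Ici_self
  · exact hf'

namespace IsSIRSolution

variable {β γ x y : ℝ} {S I : ℝ → ℝ}

theorem continuousOn_S (h : IsSIRSolution β γ x y S I) : ContinuousOn S (Ici 0) :=
  fun t ht => (h.2.2 t ht).1.continuousWithinAt

theorem continuousOn_I (h : IsSIRSolution β γ x y S I) : ContinuousOn I (Ici 0) :=
  fun t ht => (h.2.2 t ht).2.continuousWithinAt

theorem S_eq (h : IsSIRSolution β γ x y S I) {t : ℝ} (ht : 0 ≤ t) :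
    S t = x * Real.exp (∫ s in (0 : ℝ)..t, -(β * I s)) := by
  rw [← h.1]
  refine eq_mul_exp_integral_of_hasDerivWithinAt (continuousOn_const.mul h.continuousOn_I).neg
    (fun s hs => ?_) ht
  convert (h.2.2 s hs).1 using 1
  ring

theorem I_eq (h : IsSIRSolution β γ x y S I) {t : ℝ} (ht : 0 ≤ t) :
    I t = y * Real.exp (∫ s in (0 : ℝ)..t, (β * S s - γ)) := by
  rw [← h.2.1]
  refine eq_mul_exp_integral_of_hasDerivWithinAt
    ((continuousOn_const.mul h.continuousOn_S).sub continuousOn_const) (fun s hs => ?_) ht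
  convert (h.2.2 s hs).2 using 1
  ring

theorem S_nonneg (h : IsSIRSolution β γ x y S I) (hx : 0 ≤ x) {t : ℝ} (ht : 0 ≤ t) :
    0 ≤ S t :=
  h.S_eq ht ▸ mul_nonneg hx (Real.exp_pos _).le

theorem I_nonneg (h : IsSIRSolution β γ x y S I) (hy : 0 ≤ y) {t : ℝ} (ht : 0 ≤ t) :
    0 ≤ I t :=
  h.I_eq ht ▸ mul_nonneg hy (Real.exp_pos _).le

theorem S_pos (h : IsSIRSolution β γ x y S I) (hx : 0 < x) {t : ℝ} (ht : 0 ≤ t) : 0 < S t :=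
  h.S_eq ht ▸ mul_pos hx (Real.exp_pos _)

theorem I_pos (h : IsSIRSolution β γ x y S I) (hy : 0 < y) {t : ℝ} (ht : 0 ≤ t) : 0 < I t :=
  h.I_eq ht ▸ mul_pos hy (Real.exp_pos _)

theorem antitoneOn_add (h : IsSIRSolution β γ x y S I) (hγ : 0 ≤ γ) (hy : 0 ≤ y) :
    AntitoneOn (fun t => S t + I t) (Ici 0) :=
  antitoneOn_Ici_of_hasDerivWithinAt_nonpos (f' := fun t => -(γ * I t))
    (fun t ht => ((h.2.2 t ht).1.add (h.2.2 t ht).2).congr_deriv (by ring))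
    (fun t ht => neg_nonpos.2 (mul_nonneg hγ (h.I_nonneg hy ht.le)))

theorem add_le (h : IsSIRSolution β γ x y S I) (hγ : 0 ≤ γ) (hy : 0 ≤ y) {t : ℝ}
    (ht : 0 ≤ t) : S t + I t ≤ x + y := by
  simpa only [h.1, h.2.1] using h.antitoneOn_add hγ hy self_mem_Ici ht ht

end IsSIRSolution

theorem stmt_0_general (β γ x y : ℝ) (hγ : 0 < γ) (hx : 0 ≤ x) (hy : 0 ≤ y)
    (S I : ℝ → ℝ) (hSI : IsSIRSolution β γ x y S I) :
    (∀ t, 0 ≤ t → 0 ≤ S t ∧ 0 ≤ I t ∧ S t + I t ≤ x + y) ∧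
    (0 < x → ∀ t, 0 ≤ t → 0 < S t) ∧
    (0 < y → ∀ t, 0 ≤ t → 0 < I t) :=
  ⟨fun _ ht => ⟨hSI.S_nonneg hx ht, hSI.I_nonneg hy ht, hSI.add_le hγ.le hy ht⟩,
    fun hx' _ ht => hSI.S_pos hx' ht, fun hy' _ ht => hSI.I_pos hy' ht⟩

theorem stmt_0 (β γ x y : ℝ) (hβ : 0 < β) (hγ : 0 < γ) (hx : 0 ≤ x) (hy : 0 ≤ y)
    (S I : ℝ → ℝ) (hSI : IsSIRSolution β γ x y S I) :
    (∀ t, 0 ≤ t → 0 ≤ S t ∧ 0 ≤ I t ∧ S t + I t ≤ x + y) ∧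
    (0 < x → ∀ t, 0 ≤ t → 0 < S t) ∧
    (0 < y → ∀ t, 0 ≤ t → 0 < I t) :=
  stmt_0_general β γ x y hγ hx hy S I hSI
end

section
/- Let x > 0 and y > μ, and let S, I be the SIR solution with initial data (x, y). Then β S(u(x, y)) − γ < 0; consequently I'(u(x, y)) = (β S(u(x, y)) − γ) I(u(x, y)) < 0. -/
open Set Filter Topology

theorem stmt_4 (β γ μ x y : ℝ) (hβ : 0 < β) (hγ : 0 < γ) (hμ : 0 < μ)
    (hx : 0 < x) (hy : μ < y)
    (S I : ℝ → ℝ) (hSI : IsSIRSolution β γ x y S I)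
    (u : ℝ) (hu : IsLeast {t : ℝ | 0 ≤ t ∧ I t ≤ μ} u) :
    β * S u - γ < 0 ∧ (β * S u - γ) * I u < 0 := by
  obtain ⟨hS0, hI0, hderiv⟩ := hSI
  have hu0 : 0 ≤ u := hu.1.1
  have hIu : I u ≤ μ := hu.1.2
  -- continuity
  have hcS : ContinuousOn S (Ici 0) := fun t ht => (hderiv t ht).1.continuousWithinAt
  have hcI : ContinuousOn I (Ici 0) := fun t ht => (hderiv t ht).2.continuousWithinAt
  -- u > 0
  have hupos : 0 < u := by
    rcases hu0.lt_or_eq with h | h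
    · exact h
    · exfalso; rw [← h] at hIu; rw [hI0] at hIu; linarith
  -- I > μ strictly before u
  have hIgt : ∀ t, 0 ≤ t → t < u → μ < I t := by
    intro t ht htu
    by_contra h
    push_neg at h
    exact absurd (hu.2 ⟨ht, h⟩) (not_le.2 htu)
  -- I u = μ
  have hIuge : μ ≤ I u := by
    have hne : (𝓝[Ioo 0 u] u).NeBot := right_nhdsWithin_Ioo_neBot hupos
    have htd : Filter.Tendsto I (𝓝[Ioo 0 u] u) (𝓝 (I u)) :=
      ((hcI u hu0).mono (fun t ht => le_of_lt ht.1)).tendsto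
    refine ge_of_tendsto htd ?_
    filter_upwards [self_mem_nhdsWithin] with t ht
    exact (hIgt t ht.1.le ht.2).le
  have hIueq : I u = μ := le_antisymm hIu hIuge
  -- I ≥ μ on [0, u]
  have hIge : ∀ t ∈ Icc 0 u, μ ≤ I t := by
    rintro t ⟨ht0, htu⟩
    rcases htu.lt_or_eq with h | h
    · exact (hIgt t ht0 h).le
    · rw [h, hIueq]
  -- bound M on I over [0, u]
  obtain ⟨tm, htm, hmax⟩ := isCompact_Icc.exists_isMaxOn (nonempty_Icc.2 hu0)
    (hcI.mono (Icc_subset_Ici_self))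
  set M : ℝ := I tm with hM
  have hMb : ∀ t ∈ Icc 0 u, I t ≤ M := fun t ht => hmax ht
  -- S > 0 on [0, u]
  have hSpos : ∀ t ∈ Icc 0 u, 0 < S t := by
    by_contra h
    push_neg at h
    obtain ⟨t1, ht1, hSt1⟩ := h
    set A : Set ℝ := Icc 0 u ∩ S ⁻¹' (Iic 0) with hA
    have hAne : A.Nonempty := ⟨t1, ht1, hSt1⟩
    have hAcl : IsClosed A :=
      (hcS.mono Icc_subset_Ici_self).preimage_isClosed_of_isClosed isClosed_Icc isClosed_Iic
    have hAbdd : BddBelow A := ⟨0, fun t ht => ht.1.1⟩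
    set t0 : ℝ := sInf A with ht0def
    have ht0A : t0 ∈ A := hAcl.csInf_mem hAne hAbdd
    have ht0Icc : t0 ∈ Icc 0 u := ht0A.1
    have ht0pos : 0 < t0 := by
      rcases ht0Icc.1.lt_or_eq with h' | h'
      · exact h'
      · exfalso; have := ht0A.2; rw [← h'] at this; simp only [mem_preimage, mem_Iic] at this
        rw [hS0] at this; linarith
    have hSnn : ∀ t ∈ Ico 0 t0, 0 < S t := by
      rintro t ⟨ht0', htlt⟩
      by_contra hc
      push_neg at hc
      have : t ∈ A := ⟨⟨ht0', htlt.le.trans ht0Icc.2⟩, hc⟩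
      exact absurd (csInf_le hAbdd this) (not_le.2 htlt)
    -- f = S t * exp (β M t) is monotone on [0, t0]
    set f : ℝ → ℝ := fun t => S t * Real.exp (β * M * t) with hf
    set f' : ℝ → ℝ := fun t =>
      -(β * S t * I t) * Real.exp (β * M * t) + S t * (Real.exp (β * M * t) * (β * M)) with hf'
    have hmono : MonotoneOn f (Icc 0 t0) := by
      apply monotoneOn_of_hasDerivWithinAt_nonneg (convex_Icc 0 t0)
      · exact ((hcS.mono (Icc_subset_Ici_self.trans (Ici_subset_Ici.2 le_rfl))).mono
          (Icc_subset_Icc le_rfl ht0Icc.2) |>.mono (by intro z hz; exact ⟨hz.1, hz.2.trans le_rfl⟩)).mul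
          (Real.continuous_exp.comp (continuous_const.mul continuous_id)).continuousOn
      · intro t ht
        rw [interior_Icc] at ht
        have ht' : t ∈ Ici (0:ℝ) := le_of_lt ht.1
        have h1 : HasDerivWithinAt S (-(β * S t * I t)) (interior (Icc 0 t0)) t := by
          rw [interior_Icc]
          exact (hderiv t ht').1.mono (fun z hz => le_of_lt hz.1)
        have h2 : HasDerivAt (fun s => Real.exp (β * M * s)) (Real.exp (β * M * t) * (β * M)) t := by
          have := ((hasDerivAt_id t).const_mul (β * M)).exp
          simpa [mul_comm] using this
        rw [interior_Icc] at *
        exact h1.mul (h2.hasDerivWithinAt)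
      · intro t ht
        rw [interior_Icc] at ht
        have hSt : 0 < S t := hSnn t ⟨ht.1.le, ht.2⟩
        have hIt : I t ≤ M := hMb t ⟨ht.1.le, ht.2.le.trans ht0Icc.2⟩
        have hexp : 0 < Real.exp (β * M * t) := Real.exp_pos _
        nlinarith [mul_nonneg (mul_nonneg (mul_nonneg hβ.le hSt.le) (sub_nonneg.2 hIt)) hexp.le]
    have h1 : f 0 ≤ f t0 := hmono ⟨le_rfl, ht0pos.le⟩ ⟨ht0pos.le, le_rfl⟩ ht0pos.le
    have hf0 : f 0 = x := by simp [hf, hS0]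
    have hft0 : f t0 ≤ 0 := by
      have hSt0 : S t0 ≤ 0 := ht0A.2
      have : (0:ℝ) < Real.exp (β * M * t0) := Real.exp_pos _
      simp only [hf]
      exact mul_nonpos_of_nonpos_of_nonneg hSt0 this.le
    linarith [hf0 ▸ h1]
  -- main claim
  have hkey : β * S u - γ < 0 := by
    by_contra h
    push_neg at h
    -- S is antitone on [0,u]
    have hanti : AntitoneOn S (Icc 0 u) := by
      apply antitoneOn_of_hasDerivWithinAt_nonpos (convex_Icc 0 u)
      · exact hcS.mono Icc_subset_Ici_self
      · intro t ht
        rw [interior_Icc] at ht ⊢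
        exact (hderiv t ht.1.le).1.mono (fun z hz => le_of_lt hz.1)
      · intro t ht
        rw [interior_Icc] at ht
        have hSt : 0 < S t := hSpos t ⟨ht.1.le, ht.2.le⟩
        have hIt : 0 < I t := lt_of_lt_of_le hμ (hIge t ⟨ht.1.le, ht.2.le⟩)
        have : 0 < β * S t * I t := by positivity
        linarith
    -- so I' ≥ 0 on [0,u], hence I monotone
    have hImono : MonotoneOn I (Icc 0 u) := by
      apply monotoneOn_of_hasDerivWithinAt_nonneg (convex_Icc 0 u)
      · exact hcI.mono Icc_subset_Ici_self
      · intro t ht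
        rw [interior_Icc] at ht ⊢
        exact (hderiv t ht.1.le).2.mono (fun z hz => le_of_lt hz.1)
      · intro t ht
        rw [interior_Icc] at ht
        have hSt : S u ≤ S t := hanti ⟨ht.1.le, ht.2.le⟩ ⟨hu0, le_rfl⟩ ht.2.le
        have hIt : 0 < I t := lt_of_lt_of_le hμ (hIge t ⟨ht.1.le, ht.2.le⟩)
        have h2 : 0 ≤ β * S t - γ := by nlinarith
        nlinarith
    have := hImono ⟨le_rfl, hu0⟩ ⟨hu0, le_rfl⟩ hu0
    rw [hI0, hIueq] at this
    linarith
  refine ⟨hkey, ?_⟩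
  rw [hIueq]
  exact mul_neg_of_neg_of_pos hkey hμ
end
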